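/- Let S be a simple graph on a finite vertex type V with p vertices, and suppose V can be partitioned into pairwise disjoint parts such that exactly q of the parts are singletons, and every part W with more than one element either consists of exactly two vertices that are adjacent in S, or induces a subgraph of S that has an odd number of vertices and contains a Hamiltonian cycle. Then there exists a constant C > 0 such that for every finite simple graph G with n vertices and m edges, the number of injective graph homomorphisms from S to G is at most C · n^q · m^{(p−q)/2}. -/

import Mathlib

/-!
Restricting a homomorphism `S →g G` to the parts of the partition embeds it into the product
of the homomorphism sets of the induced parts. A singleton part has at most `n` images. A part
with at least two vertices has a closed walk of length `|B|` through all of its vertices (the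
edge traversed back and forth, or the Hamiltonian cycle), and a homomorphism is determined by
the image of that walk, a closed walk of length `|B|` in `G`. Their number is
`tr (A ^ |B|) ≤ ‖A‖_F ^ |B| = (2m) ^ (|B| / 2)` by Cauchy–Schwarz for the Frobenius norm, and
the part sizes of the non-singleton parts add up to `p - q`.
-/

open Finset

namespace Matrix

open scoped Norms.Frobenius

variable {n : Type*} [Fintype n]

theorem frobenius_norm_eq_sqrt {m : Type*} [Fintype m] (A : Matrix m n ℝ) :
    ‖A‖ = √(∑ i, ∑ j, A i j ^ 2) := by
  simp only [frobenius_norm_def, Real.sqrt_eq_rpow, Real.rpow_two, Real.norm_eq_abs, sq_abs]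

theorem trace_mul_le_frobenius_norm_mul (A B : Matrix n n ℝ) : (A * B).trace ≤ ‖A‖ * ‖B‖ := by
  have hcs := Real.sum_mul_le_sqrt_mul_sqrt (univ : Finset (n × n))
    (fun x => A x.1 x.2) (fun x => Bᵀ x.1 x.2)
  rw [← frobenius_norm_transpose B, frobenius_norm_eq_sqrt, frobenius_norm_eq_sqrt]
  simpa only [trace, diag_apply, mul_apply, transpose_apply, Fintype.sum_prod_type] using hcs

theorem trace_pow_le_frobenius_norm_pow [DecidableEq n] (M : Matrix n n ℝ) {t : ℕ} (ht : 2 ≤ t) :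
    (M ^ t).trace ≤ ‖M‖ ^ t := by
  -- Fails for `t = 1`: `M = 1` has trace `card n` but Frobenius norm `√(card n)`.
  obtain ⟨s, rfl⟩ := Nat.exists_eq_add_of_le' ht
  calc (M ^ (s + 1 + 1)).trace = (M * M ^ (s + 1)).trace := by rw [pow_succ']
    _ ≤ ‖M‖ * ‖M ^ (s + 1)‖ := trace_mul_le_frobenius_norm_mul _ _
    _ ≤ ‖M‖ * ‖M‖ ^ (s + 1) := by gcongr; exact norm_pow_le' M s.succ_pos
    _ = ‖M‖ ^ (s + 1 + 1) := (pow_succ' _ _).symm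

end Matrix

namespace SimpleGraph

open scoped Matrix.Norms.Frobenius

variable {U V W : Type*}

abbrev ClosedWalks (G : SimpleGraph W) (t : ℕ) : Type _ :=
  Σ a : W, {w : G.Walk a a // w.length = t}

section ClosedWalks

variable [Fintype W] [DecidableEq W] (G : SimpleGraph W) [DecidableRel G.Adj]

theorem frobenius_norm_adjMatrix : ‖G.adjMatrix ℝ‖ = √(2 * #G.edgeFinset) := by
  have hsq : ∀ u v, G.adjMatrix ℝ u v ^ 2 = G.adjMatrix ℝ u v := fun u v => by
    by_cases h : G.Adj u v <;> simp [h]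
  have hdeg : ∀ u, ∑ v, G.adjMatrix ℝ u v = G.degree u := fun u => by
    simp [adjMatrix_apply, ← card_neighborFinset_eq_degree, neighborFinset_eq_filter]
  rw [Matrix.frobenius_norm_eq_sqrt]
  simp only [hsq, hdeg]
  exact_mod_cast congrArg (√·) (congrArg (Nat.cast (R := ℝ)) G.sum_degrees_eq_twice_card_edges)

theorem card_closedWalks_eq_trace (t : ℕ) :
    (Nat.card (G.ClosedWalks t) : ℝ) = ((G.adjMatrix ℝ) ^ t).trace := by
  rw [Nat.card_sigma, Matrix.trace]
  push_cast
  simp only [Matrix.diag_apply, adjMatrix_pow_apply_eq_card_walk, Nat.card_eq_fintype_card]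
  exact sum_congr rfl fun a _ => congrArg _ (Fintype.card_congr (.refl _))

theorem card_closedWalks_le {t : ℕ} (ht : 2 ≤ t) :
    (Nat.card (G.ClosedWalks t) : ℝ) ≤ √(2 * #G.edgeFinset) ^ t := by
  rw [card_closedWalks_eq_trace, ← frobenius_norm_adjMatrix]
  exact Matrix.trace_pow_le_frobenius_norm_pow _ ht

end ClosedWalks

section Homs

variable {H : SimpleGraph U} {G : SimpleGraph W}

theorem card_hom_le_pow [Finite U] [Finite W] : Nat.card (H →g G) ≤ Nat.card W ^ Nat.card U := by
  rw [← Nat.card_fun]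
  exact Nat.card_le_card_of_injective _ DFunLike.coe_injective

theorem card_hom_le_prod_card_hom_induce [Finite W] [Fintype V] [DecidableEq V] (S : SimpleGraph V)
    (P : Finpartition (univ : Finset V)) :
    Nat.card (S →g G) ≤ ∏ B ∈ P.parts, Nat.card (S.induce (B : Set V) →g G) := by
  rw [← prod_attach, ← univ_eq_attach, ← Nat.card_pi]
  refine Nat.card_le_card_of_injective (fun f B => f.comp (Embedding.induce _).toHom)
    fun f g hfg => DFunLike.ext _ _ fun v => ?_
  obtain ⟨B, hB, hvB⟩ := P.exists_mem (mem_univ v)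
  exact DFunLike.congr_fun (congrFun hfg ⟨B, hB⟩) ⟨v, hvB⟩

variable [Fintype W] [DecidableEq W] [DecidableRel G.Adj]

theorem card_hom_le_card_closedWalks {a : U} (w : H.Walk a a) (hw : ∀ x, x ∈ w.support) :
    Nat.card (H →g G) ≤ Nat.card (G.ClosedWalks w.length) := by
  refine Nat.card_le_card_of_injective (fun f => ⟨f a, w.map f, w.length_map f⟩) fun f g hfg => ?_
  have hsupp := congrArg (fun c : G.ClosedWalks w.length => c.2.1.support) hfg
  simp only [Walk.support_map, List.map_inj_left] at hsupp
  exact DFunLike.ext _ _ fun x => hsupp x (hw x)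

theorem card_hom_le_of_spanning_closedWalk {a : U} (w : H.Walk a a) (hw : ∀ x, x ∈ w.support)
    (hlen : 2 ≤ w.length) :
    (Nat.card (H →g G) : ℝ) ≤ √(2 * #G.edgeFinset) ^ w.length :=
  (Nat.cast_le.2 (card_hom_le_card_closedWalks w hw)).trans (card_closedWalks_le G hlen)

end Homs

theorem Adj.exists_spanning_closedWalk_induce {S : SimpleGraph V} {B : Finset V} (hB : #B = 2)
    {u v : V} (hu : u ∈ B) (hv : v ∈ B) (huv : S.Adj u v) :
    ∃ (a : (B : Set V)) (w : (S.induce (B : Set V)).Walk a a),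
      w.length = #B ∧ ∀ x, x ∈ w.support := by
  classical
  have hadj : (S.induce (B : Set V)).Adj ⟨u, hu⟩ ⟨v, hv⟩ := huv
  refine ⟨_, .cons hadj (.cons hadj.symm .nil), by simp [hB], fun ⟨x, hx⟩ => ?_⟩
  have hpair : {u, v} = B := eq_of_subset_of_card_le
    (insert_subset hu (singleton_subset_iff.2 hv)) (by rw [hB, card_pair huv.ne])
  obtain rfl | rfl : x = u ∨ x = v := by simpa [← hpair] using hx
  all_goals simp

theorem IsHamiltonian.exists_spanning_closedWalk [Fintype U] [DecidableEq U] {H : SimpleGraph U}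
    (hH : H.IsHamiltonian) (hU : Nat.card U ≠ 1) :
    ∃ (a : U) (w : H.Walk a a), w.length = Nat.card U ∧ ∀ x, x ∈ w.support := by
  rw [Nat.card_eq_fintype_card] at hU ⊢
  obtain ⟨a, w, hw⟩ := hH hU
  exact ⟨a, w, hw.length_eq, hw.mem_support⟩

theorem card_hom_induce_le [Fintype W] [DecidableEq W] (G : SimpleGraph W) [DecidableRel G.Adj]
    {S : SimpleGraph V} {B : Finset V} (hB : B.Nonempty)
    (hspan : 1 < #B → ∃ (a : (B : Set V)) (w : (S.induce (B : Set V)).Walk a a),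
      w.length = #B ∧ ∀ x, x ∈ w.support) :
    (Nat.card (S.induce (B : Set V) →g G) : ℝ) ≤
      if #B = 1 then (Fintype.card W : ℝ) else √(2 * #G.edgeFinset) ^ #B := by
  split_ifs with h1
  · exact_mod_cast (card_hom_le_pow (H := S.induce (B : Set V)) (G := G)).trans_eq (by simp [h1])
  · have h2 : 1 < #B := lt_of_le_of_ne hB.card_pos (Ne.symm h1)
    obtain ⟨a, w, hlen, hw⟩ := hspan h2
    rw [← hlen]
    exact card_hom_le_of_spanning_closedWalk w hw (by omega)

end SimpleGraph

theorem Finpartition.prod_ite_card_eq_one {V M : Type*} [DecidableEq V] [CommMonoid M]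
    {s : Finset V} (P : Finpartition s) (x y : M) :
    ∏ B ∈ P.parts, (if #B = 1 then x else y ^ #B) =
      x ^ #{B ∈ P.parts | #B = 1} * y ^ (#s - #{B ∈ P.parts | #B = 1}) := by
  rw [prod_ite, prod_const, prod_pow_eq_pow_sum]
  congr 2
  have hsplit := sum_filter_add_sum_filter_not P.parts (#· = 1) card
  rw [P.sum_card_parts, sum_congr rfl fun B hB => (mem_filter.1 hB).2, sum_const,
    smul_eq_mul, mul_one] at hsplit
  omega

theorem Real.sqrt_pow_eq_rpow {x : ℝ} (hx : 0 ≤ x) (n : ℕ) : √x ^ n = x ^ ((n : ℝ) / 2) := by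
  rw [Real.sqrt_eq_rpow, ← Real.rpow_natCast, ← Real.rpow_mul hx]
  ring_nf

/-- If the `p` vertices of a sample graph `S` can be partitioned into parts of
which exactly `q` are singletons, and every non-singleton part is either an
adjacent pair or induces a subgraph with an odd number of vertices containing a
Hamiltonian cycle, then there is a constant `C > 0` such that every graph `G`
with `n` vertices and `m` edges contains at most `C · n^q · m^((p-q)/2)`
injective homomorphic images of `S`. -/
theorem stmt_10 {V : Type} [Fintype V] [DecidableEq V] (S : SimpleGraph V)
    (p q : ℕ) (hp : Fintype.card V = p)
    (P : Finpartition (Finset.univ : Finset V))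
    (hq : (P.parts.filter fun B => B.card = 1).card = q)
    (hparts : ∀ B ∈ P.parts, 1 < B.card →
      (B.card = 2 ∧ ∃ u ∈ B, ∃ v ∈ B, S.Adj u v) ∨
      (Odd B.card ∧ (S.induce (B : Set V)).IsHamiltonian)) :
    ∃ C : ℝ, 0 < C ∧
      ∀ (W : Type) (_ : Fintype W) (_ : DecidableEq W)
        (G : SimpleGraph W) (_ : DecidableRel G.Adj),
        (Nat.card {f : S →g G // Function.Injective f} : ℝ) ≤
          C * (Fintype.card W : ℝ) ^ q *
            (G.edgeFinset.card : ℝ) ^ (((p : ℝ) - q) / 2) := by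
  have hqp : q ≤ p := hq ▸ hp ▸ (card_filter_le _ _).trans P.card_parts_le_card
  refine ⟨√2 ^ (p - q), by positivity, fun W _ _ G _ => ?_⟩
  have hpart : ∀ B ∈ P.parts, (Nat.card (S.induce (B : Set V) →g G) : ℝ) ≤
      if #B = 1 then (Fintype.card W : ℝ) else √(2 * #G.edgeFinset) ^ #B := by
    refine fun B hB => SimpleGraph.card_hom_induce_le G (P.nonempty_of_mem_parts hB) fun h2 => ?_
    rcases hparts B hB h2 with ⟨hcard, u, hu, v, hv, huv⟩ | ⟨-, hham⟩
    · exact huv.exists_spanning_closedWalk_induce hcard hu hv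
    · simpa using hham.exists_spanning_closedWalk (by simpa using h2.ne')
  calc (Nat.card {f : S →g G // Function.Injective f} : ℝ)
      ≤ Nat.card (S →g G) := by exact_mod_cast Finite.card_subtype_le _
    _ ≤ ∏ B ∈ P.parts, (Nat.card (S.induce (B : Set V) →g G) : ℝ) := by
      exact_mod_cast SimpleGraph.card_hom_le_prod_card_hom_induce (G := G) S P
    _ ≤ ∏ B ∈ P.parts, if #B = 1 then (Fintype.card W : ℝ) else √(2 * #G.edgeFinset) ^ #B :=
      prod_le_prod (fun _ _ => by positivity) hpart
    _ = (Fintype.card W : ℝ) ^ q * (√2 * √(#G.edgeFinset : ℝ)) ^ (p - q) := by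
      rw [P.prod_ite_card_eq_one, hq, card_univ, hp, Real.sqrt_mul zero_le_two]
    _ = _ := by
      rw [mul_pow, Real.sqrt_pow_eq_rpow (Nat.cast_nonneg _), Nat.cast_sub hqp]
      ring
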